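/- In the baseline sequential search model with distinct values, if the observed data reveal only the first inspected product f, the purchased product h ≠ f, and the market M (inspection statuses of all other products unknown), then optimality of the underlying search process implies: (a) z_f > z_h; (b) w_h > u_f; and (c) w_h > w_k for every product k ∈ M \ {f, h}, where z_j is the reservation value, u_j the purchase value, and w_j = min(z_j, u_j) the effective value. -/

import Mathlib

/-- An action in the baseline sequential search model over `n` products. -/
inductive SearchAction (n : ℕ) where
  | inspect (j : Fin n)
  | purchase (j : Fin n)
deriving DecidableEq

namespace SearchAction

/-- The Gittins index of an action. -/
def val {n : ℕ} (z u : Fin n → ℝ) : SearchAction n → ℝ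
  | inspect j => z j
  | purchase j => u j

/-- Availability given the list `prev` of previously selected actions. -/
def available {n : ℕ} (prev : List (SearchAction n)) : SearchAction n → Prop
  | inspect j => inspect j ∉ prev
  | purchase j => inspect j ∈ prev ∧ purchase j ∉ prev

/-- A realized optimal search process ending in the purchase of `h`:
selected actions are available, follow the Gittins index policy, all steps but
the last are inspections, and the last step purchases `h`. -/
def IsOptimalSearchEndingIn {n : ℕ} (z u : Fin n → ℝ) (h : Fin n)
    (seq : List (SearchAction n)) : Prop :=
  seq ≠ [] ∧
  (∀ t : Fin seq.length, available (seq.take t) (seq.get t)) ∧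
  (∀ t : Fin seq.length, ∀ a, available (seq.take t) a →
      val z u a ≤ val z u (seq.get t)) ∧
  (∀ t : Fin seq.length, (t : ℕ) < seq.length - 1 →
      ∃ j, seq.get t = inspect j) ∧
  seq.getLast? = some (purchase h)

end SearchAction

/-!
At the step where `h` is inspected and at the final step where it is purchased, every
other available action has a smaller index. The first step gives (a). Since `f` was
inspected before either step and nothing was purchased before the end, purchasing `f`
is available at both, which gives (b). For any other product `k`, whichever of its two
actions is still open at a given step is available there and has index at least
`w k`, which gives (c).
-/

namespace SearchAction

variable {n : ℕ} {z u : Fin n → ℝ} {h : Fin n} {seq : List (SearchAction n)}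

theorem exists_available_min_le_val (z u : Fin n → ℝ) {prev : List (SearchAction n)}
    {k : Fin n} (hk : purchase k ∉ prev) :
    ∃ a, (a = inspect k ∨ a = purchase k) ∧ available prev a ∧
      min (z k) (u k) ≤ val z u a := by
  by_cases hi : inspect k ∈ prev
  · exact ⟨purchase k, .inr rfl, ⟨hi, hk⟩, min_le_right _ _⟩
  · exact ⟨inspect k, .inl rfl, hi, min_le_left _ _⟩

theorem exists_inspect_lt_of_purchase
    (hav : ∀ t : Fin seq.length, available (seq.take t) (seq.get t))
    {t : ℕ} (ht : t < seq.length) {j : Fin n} (hj : seq[t] = purchase j) :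
    ∃ s < t, ∃ hs : s < seq.length, seq[s] = inspect j := by
  have := hav ⟨t, ht⟩
  simp only [List.get_eq_getElem, hj, available] at this
  obtain ⟨s, hs, hsj⟩ := List.mem_take_iff_getElem.mp this.1
  exact ⟨s, (lt_min_iff.mp hs).1, (lt_min_iff.mp hs).2, hsj⟩

namespace IsOptimalSearchEndingIn

theorem val_lt_of_available (hopt : IsOptimalSearchEndingIn z u h seq)
    (hinj : Function.Injective (val z u)) {t : ℕ} (ht : t < seq.length)
    {a b : SearchAction n} (hb : seq[t] = b) (ha : available (seq.take t) a) (hab : a ≠ b) :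
    val z u a < val z u b := by
  subst hb
  exact (hopt.2.2.1 ⟨t, ht⟩ a ha).lt_of_ne (hinj.ne hab)

theorem exists_purchase_step (hopt : IsOptimalSearchEndingIn z u h seq) :
    ∃ T, ∃ hT : T < seq.length, seq[T] = purchase h ∧
      ∀ t ≤ T, ∀ j, purchase j ∉ seq.take t := by
  obtain ⟨hne, -, -, hins, hlast⟩ := hopt
  have hT : seq.length - 1 < seq.length := Nat.sub_one_lt (by simpa using hne)
  refine ⟨seq.length - 1, hT, ?_, fun t htT j hj => ?_⟩
  · rw [List.getLast?_eq_getElem?, List.getElem?_eq_getElem hT] at hlast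
    exact Option.some_injective _ hlast
  · obtain ⟨i, hi, hij⟩ := List.mem_take_iff_getElem.mp hj
    obtain ⟨j', hj'⟩ := hins ⟨i, (lt_min_iff.mp hi).2⟩ ((lt_min_iff.mp hi).1.trans_le htT)
    simp only [List.get_eq_getElem, hij] at hj'
    cases hj'

end IsOptimalSearchEndingIn

end SearchAction

open SearchAction in
/-- **Scenario 3 of the incomplete-data analysis:** only the first inspected
product `f`, the purchased product `h ≠ f`, and the market are observed.  With
pairwise distinct values, optimality of the underlying search process implies
(a) `z f > z h`; (b) `w h > u f`; and (c) `w h > w k` for every other product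
`k`, where `w j = min (z j) (u j)` is the effective value. -/
theorem first_inspection_and_purchase_implications
    {n : ℕ} (z u : Fin n → ℝ) (f h : Fin n) (hfh : f ≠ h)
    (hdistinct : Function.Injective (val z u))
    (seq : List (SearchAction n))
    (hopt : IsOptimalSearchEndingIn z u h seq)
    (hfirst : seq.head? = some (SearchAction.inspect f)) :
    z h < z f ∧
    u f < min (z h) (u h) ∧
    (∀ k : Fin n, k ≠ f → k ≠ h → min (z k) (u k) < min (z h) (u h)) := by
  obtain ⟨T, hT, hTh, hnopurch⟩ := hopt.exists_purchase_step
  obtain ⟨s, hsT, hs, hsh⟩ := exists_inspect_lt_of_purchase hopt.2.1 hT hTh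
  have hpos : 0 < seq.length := hs.pos
  have h0 : seq[0] = inspect f := by
    rw [List.head?_eq_getElem?, List.getElem?_eq_getElem hpos] at hfirst
    exact Option.some_injective _ hfirst
  have hs0 : 0 < s := Nat.pos_of_ne_zero fun hs0 => by
    subst hs0
    exact hfh (inspect.inj (h0.symm.trans hsh))
  have hf_mem : ∀ t, 0 < t → inspect f ∈ seq.take t := fun t ht =>
    List.mem_take_iff_getElem.mpr ⟨0, lt_min ht hpos, h0⟩
  have below_zh : ∀ a, available (seq.take s) a → a ≠ inspect h → val z u a < z h :=
    fun a => hopt.val_lt_of_available hdistinct hs hsh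
  have below_uh : ∀ a, available (seq.take T) a → a ≠ purchase h → val z u a < u h :=
    fun a => hopt.val_lt_of_available hdistinct hT hTh
  refine ⟨?_, lt_min ?_ ?_, fun k _ hkh => ?_⟩
  · exact hopt.val_lt_of_available hdistinct hpos h0 (a := inspect h) List.not_mem_nil
      (by simpa using hfh.symm)
  · exact below_zh (purchase f) ⟨hf_mem s hs0, hnopurch s hsT.le f⟩ (by simp)
  · exact below_uh (purchase f) ⟨hf_mem T (hs0.trans hsT), hnopurch T le_rfl f⟩
      (by simpa using hfh)
  · obtain ⟨a, hak, ha, hka⟩ := exists_available_min_le_val z u (hnopurch s hsT.le k)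
    obtain ⟨b, hbk, hb, hkb⟩ := exists_available_min_le_val z u (hnopurch T le_rfl k)
    exact lt_min (hka.trans_lt (below_zh a ha (by rcases hak with rfl | rfl <;> simp [hkh])))
      (hkb.trans_lt (below_uh b hb (by rcases hbk with rfl | rfl <;> simp [hkh])))
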